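/- Let M_u and M_l be matroids on the same finite ground set E such that every circuit of M_u is a union of circuits of M_l. Then the collection 𝓕 of all subsets of E that are both independent in M_u and spanning in M_l satisfies the symmetric exchange axiom, i.e., is a Δ-matroid. -/

import Mathlib

open Set
open scoped symmDiff

/-- The symmetric exchange axiom for a collection of subsets. -/
def SymExch {α : Type*} (𝓕 : Set (Set α)) : Prop :=
  ∀ ⦃F₁⦄, F₁ ∈ 𝓕 → ∀ ⦃F₂⦄, F₂ ∈ 𝓕 →
    ∀ x ∈ F₁ ∆ F₂, ∃ y ∈ F₁ ∆ F₂, F₁ ∆ ({x, y} : Set α) ∈ 𝓕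

/-- A Δ-matroid on a finite ground set. -/
structure DeltaMatroid (α : Type*) where
  E : Set α
  Feasible : Set (Set α)
  ground_finite : E.Finite
  subset_ground : ∀ F ∈ Feasible, F ⊆ E
  feasible_nonempty : Feasible.Nonempty
  exchange : SymExch Feasible

/-- A lower base: a feasible set of minimum cardinality. -/
def DeltaMatroid.LowerBase {α : Type*} (D : DeltaMatroid α) (B : Set α) : Prop :=
  B ∈ D.Feasible ∧ ∀ F ∈ D.Feasible, B.ncard ≤ F.ncard

/-- An upper base: a feasible set of maximum cardinality. -/
def DeltaMatroid.UpperBase {α : Type*} (D : DeltaMatroid α) (B : Set α) : Prop :=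
  B ∈ D.Feasible ∧ ∀ F ∈ D.Feasible, F.ncard ≤ B.ncard

/-- A circuit of a matroid: a minimal dependent set. -/
def Matroid.IsCircuitOrig {α : Type*} (M : Matroid α) (C : Set α) : Prop :=
  C ⊆ M.E ∧ ¬ M.Indep C ∧ ∀ D, D ⊂ C → M.Indep D

/-- Every circuit of `Mu` is a union of circuits of `Ml`. -/
def CircuitsUnion {α : Type*} (Mu Ml : Matroid α) : Prop :=
  ∀ C, Mu.IsCircuitOrig C → ∃ 𝒞 : Set (Set α), (∀ C' ∈ 𝒞, Ml.IsCircuitOrig C') ∧ C = ⋃₀ 𝒞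

/-- `M` is the upper matroid of the Δ-matroid `D`. -/
def IsUpperMatroid {α : Type*} (D : DeltaMatroid α) (M : Matroid α) : Prop :=
  M.E = D.E ∧ ∀ B, M.IsBase B ↔ D.UpperBase B

/-- `M` is the lower matroid of the Δ-matroid `D`. -/
def IsLowerMatroid {α : Type*} (D : DeltaMatroid α) (M : Matroid α) : Prop :=
  M.E = D.E ∧ ∀ B, M.IsBase B ↔ D.LowerBase B

/-- Any finite dependent set contains a circuit. -/
lemma aux_exists_circuit_subset {α : Type*} (M : Matroid α) :
    ∀ n (D : Set α), D.ncard ≤ n → D.Finite → D ⊆ M.E → ¬ M.Indep D →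
      ∃ C, C ⊆ D ∧ M.IsCircuitOrig C := by
  intro n
  induction n with
  | zero =>
    intro D hn hfin hDE hdep
    rw [Nat.le_zero, Set.ncard_eq_zero hfin] at hn
    subst hn; exact absurd M.empty_indep hdep
  | succ n ih =>
    intro D hn hfin hDE hdep
    by_cases hmin : ∀ D', D' ⊂ D → M.Indep D'
    · exact ⟨D, subset_rfl, hDE, hdep, hmin⟩
    · push_neg at hmin
      obtain ⟨D', hss, hdep'⟩ := hmin
      obtain ⟨C, hCD, hC⟩ := ih D' (by
          have := Set.ncard_lt_ncard hss hfin
          omega) (hfin.subset hss.subset) (hss.subset.trans hDE) hdep'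
      exact ⟨C, hCD.trans hss.subset, hC⟩

/-- Each element of a circuit is in the closure of the rest. -/
lemma aux_circuit_closure {α : Type*} {M : Matroid α} {C : Set α} (hC : M.IsCircuitOrig C)
    {y : α} (hy : y ∈ C) : y ∈ M.closure (C \ {y}) := by
  have hind : M.Indep (C \ {y}) := hC.2.2 _ ⟨diff_subset, fun hsub => (hsub hy).2 rfl⟩
  rw [hind.mem_closure_iff_of_notMem (by simp), Matroid.dep_iff,
    Set.insert_diff_singleton, Set.insert_eq_of_mem hy]
  exact ⟨hC.2.1, hC.1⟩

/-- if every circuit of `Mu` is a union of circuits of `Ml`, the sets that are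
independent in `Mu` and spanning in `Ml` satisfy the symmetric exchange axiom. -/
theorem symExch_of_circuitsUnion {α : Type*} (Mu Ml : Matroid α)
    (hE : Mu.E = Ml.E) (hfin : Mu.E.Finite) (h : CircuitsUnion Mu Ml) :
    SymExch {F : Set α | (∃ B, Mu.IsBase B ∧ F ⊆ B) ∧ (∃ B, Ml.IsBase B ∧ B ⊆ F)} := by
  intro F₁ hF₁ F₂ hF₂ x hx
  obtain ⟨hF₁i, hF₁s⟩ := hF₁
  obtain ⟨hF₂i, hF₂s⟩ := hF₂
  have hI₁ : Mu.Indep F₁ := Matroid.indep_iff.2 hF₁i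
  have hI₂ : Mu.Indep F₂ := Matroid.indep_iff.2 hF₂i
  have hE₁ : F₁ ⊆ Ml.E := hE ▸ hI₁.subset_ground
  have hE₂ : F₂ ⊆ Ml.E := hE ▸ hI₂.subset_ground
  have hS₁ : Ml.Spanning F₁ := Matroid.spanning_iff_exists_isBase_subset'.2 ⟨hF₁s, hE₁⟩
  have hS₂ : Ml.Spanning F₂ := Matroid.spanning_iff_exists_isBase_subset'.2 ⟨hF₂s, hE₂⟩
  have mem𝓕 : ∀ F : Set α, Mu.Indep F → Ml.Spanning F →
      F ∈ {F : Set α | (∃ B, Mu.IsBase B ∧ F ⊆ B) ∧ (∃ B, Ml.IsBase B ∧ B ⊆ F)} :=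
    fun F hi hs => ⟨Matroid.indep_iff.1 hi, hs.exists_isBase_subset⟩
  rw [Set.mem_symmDiff] at hx
  rcases hx with ⟨hxF₁, hxF₂⟩ | ⟨hxF₂, hxF₁⟩
  · -- x ∈ F₁ \ F₂ : try removing x, or swap in some y ∈ F₂.
    have hI₁x : Mu.Indep (F₁ \ {x}) := hI₁.subset diff_subset
    have hE₁x : F₁ \ {x} ⊆ Ml.E := diff_subset.trans hE₁
    by_cases hsx : Ml.Spanning (F₁ \ {x})
    · refine ⟨x, Set.mem_symmDiff.2 (Or.inl ⟨hxF₁, hxF₂⟩), ?_⟩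
      have heq : F₁ ∆ ({x, x} : Set α) = F₁ \ {x} := by
        ext a; simp only [Set.mem_symmDiff, Set.mem_insert_iff, Set.mem_singleton_iff,
          Set.mem_diff, or_self]
        constructor
        · rintro (⟨ha, hax⟩ | ⟨rfl, ha⟩)
          · exact ⟨ha, hax⟩
          · exact absurd hxF₁ ha
        · rintro ⟨ha, hax⟩; exact Or.inl ⟨ha, hax⟩
      rw [heq]; exact mem𝓕 _ hI₁x hsx
    · have hne : ¬ (F₂ ⊆ Ml.closure (F₁ \ {x})) := by
        intro hsub
        apply hsx
        rw [Matroid.spanning_iff_ground_subset_closure hE₁x]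
        calc Ml.E = Ml.closure F₂ := hS₂.closure_eq.symm
          _ ⊆ Ml.closure (Ml.closure (F₁ \ {x})) := Ml.closure_subset_closure hsub
          _ = Ml.closure (F₁ \ {x}) := Ml.closure_closure _
      obtain ⟨y, hyF₂, hycl⟩ := not_subset.1 hne
      have hyx : y ≠ x := fun hh => hxF₂ (hh ▸ hyF₂)
      have hyF₁ : y ∉ F₁ := fun hh =>
        hycl (Ml.subset_closure _ hE₁x ⟨hh, hyx⟩)
      have hyE : y ∈ Ml.E := hE₂ hyF₂
      set F : Set α := insert y (F₁ \ {x}) with hF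
      have hFE : F ⊆ Ml.E := insert_subset hyE hE₁x
      -- spanning
      have hy2 : y ∈ Ml.closure (insert x (F₁ \ {x})) := by
        rw [Set.insert_diff_singleton, Set.insert_eq_of_mem hxF₁, hS₁.closure_eq]
        exact hyE
      have hx2 : x ∈ Ml.closure F := Matroid.mem_closure_insert hycl hy2
      have hsp : Ml.Spanning F := by
        rw [Matroid.spanning_iff_ground_subset_closure hFE]
        have hcl : Ml.closure (insert x F) = Ml.closure F :=
          Matroid.closure_insert_eq_of_mem_closure hx2
        have hsub : F₁ ⊆ insert x F := by
          intro a ha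
          by_cases hax : a = x
          · exact Or.inl hax
          · exact Or.inr (Or.inr ⟨ha, hax⟩)
        calc Ml.E = Ml.closure F₁ := hS₁.closure_eq.symm
          _ ⊆ Ml.closure (insert x F) := Ml.closure_subset_closure hsub
          _ = Ml.closure F := hcl
      -- independence in Mu
      have hFEu : F ⊆ Mu.E := hE ▸ hFE
      have hFind : Mu.Indep F := by
        by_contra hdep
        obtain ⟨C, hCsub, hC⟩ := aux_exists_circuit_subset Mu F.ncard F le_rfl
          (hfin.subset hFEu) hFEu hdep
        have hyC : y ∈ C := by
          by_contra hyC
          refine hC.2.1 (hI₁x.subset fun a ha => ?_)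
          rcases hCsub ha with rfl | ha'
          · exact absurd ha hyC
          · exact ha'
        obtain ⟨𝒞, h𝒞, hCeq⟩ := h C hC
        obtain ⟨C', hC'𝒞, hyC'⟩ := (hCeq ▸ hyC : y ∈ ⋃₀ 𝒞)
        have hC'C : C' ⊆ C := hCeq ▸ Set.subset_sUnion_of_mem hC'𝒞
        have hy1 : y ∈ Ml.closure (C' \ {y}) := aux_circuit_closure (h𝒞 C' hC'𝒞) hyC'
        apply hycl
        refine Ml.closure_subset_closure (fun a ha => ?_) hy1
        obtain ⟨haC', hay⟩ := ha
        rcases hCsub (hC'C haC') with rfl | ha'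
        · exact absurd rfl hay
        · exact ha'
      refine ⟨y, Set.mem_symmDiff.2 (Or.inr ⟨hyF₂, hyF₁⟩), ?_⟩
      have heq : F₁ ∆ ({x, y} : Set α) = F := by
        ext a
        simp only [Set.mem_symmDiff, Set.mem_insert_iff, Set.mem_singleton_iff, hF,
          Set.mem_diff]
        constructor
        · rintro (⟨ha, hax⟩ | ⟨(rfl | rfl), ha⟩)
          · push_neg at hax
            exact Or.inr ⟨ha, hax.1⟩
          · exact absurd hxF₁ ha
          · exact Or.inl rfl
        · rintro (rfl | ⟨ha, hax⟩)
          · exact Or.inr ⟨Or.inr rfl, hyF₁⟩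
          · exact Or.inl ⟨ha, by rintro (rfl | rfl); exacts [hax rfl, hyF₁ ha]⟩
      rw [heq]; exact mem𝓕 _ hFind hsp
  · -- x ∈ F₂ \ F₁ : try adding x, or also remove some y ∈ F₁.
    have hxE : x ∈ Mu.E := hI₂.subset_ground hxF₂
    have hIE : insert x F₁ ⊆ Mu.E := insert_subset hxE hI₁.subset_ground
    by_cases hix : Mu.Indep (insert x F₁)
    · refine ⟨x, Set.mem_symmDiff.2 (Or.inr ⟨hxF₂, hxF₁⟩), ?_⟩
      have heq : F₁ ∆ ({x, x} : Set α) = insert x F₁ := by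
        ext a; simp only [Set.mem_symmDiff, Set.mem_insert_iff, Set.mem_singleton_iff,
          or_self]
        constructor
        · rintro (⟨ha, hax⟩ | ⟨rfl, ha⟩)
          · exact Or.inr ha
          · exact Or.inl rfl
        · rintro (rfl | ha)
          · exact Or.inr ⟨rfl, hxF₁⟩
          · exact Or.inl ⟨ha, fun hax => hxF₁ (hax ▸ ha)⟩
      rw [heq]
      exact mem𝓕 _ hix (hS₁.superset (Set.subset_insert _ _) (hE ▸ hIE))
    · obtain ⟨C, hCsub, hC⟩ := aux_exists_circuit_subset Mu (insert x F₁).ncard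
        (insert x F₁) le_rfl (hfin.subset hIE) hIE hix
      have hxC : x ∈ C := by
        by_contra hxC
        refine hC.2.1 (hI₁.subset fun a ha => ?_)
        rcases hCsub ha with rfl | ha'
        · exact absurd ha hxC
        · exact ha'
      obtain ⟨y, hyC, hyF₂⟩ := not_subset.1 (fun hsub => hC.2.1 (hI₂.subset hsub))
      have hyx : y ≠ x := fun hh => hyF₂ (hh ▸ hxF₂)
      have hyF₁ : y ∈ F₁ := by
        rcases hCsub hyC with rfl | ha'
        · exact absurd rfl hyx
        · exact ha'
      have hI₁y : Mu.Indep (F₁ \ {y}) := hI₁.subset diff_subset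
      set F : Set α := insert x (F₁ \ {y}) with hF
      have hCF : C \ {y} ⊆ F := by
        intro a ⟨haC, hay⟩
        rcases hCsub haC with rfl | ha'
        · exact Or.inl rfl
        · exact Or.inr ⟨ha', hay⟩
      -- independence in Mu
      have hxcl : x ∉ Mu.closure (F₁ \ {y}) := by
        intro hxcl
        have hy1 : y ∈ Mu.closure (C \ {y}) := aux_circuit_closure hC hyC
        have hy2 : y ∈ Mu.closure F := Mu.closure_subset_closure hCF hy1
        rw [hF, Matroid.closure_insert_eq_of_mem_closure hxcl] at hy2
        have hdep : Mu.Dep (insert y (F₁ \ {y})) := hI₁y.insert_dep_iff.2 ⟨hy2, by simp⟩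
        rw [Set.insert_diff_singleton, Set.insert_eq_of_mem hyF₁] at hdep
        exact hdep.not_indep hI₁
      have hFind : Mu.Indep F :=
        ((hI₁y.notMem_closure_iff hxE).1 hxcl).1
      -- spanning in Ml
      have hFE : F ⊆ Ml.E := hE ▸ (insert_subset hxE (diff_subset.trans hI₁.subset_ground))
      obtain ⟨𝒞, h𝒞, hCeq⟩ := h C hC
      obtain ⟨C', hC'𝒞, hyC'⟩ := (hCeq ▸ hyC : y ∈ ⋃₀ 𝒞)
      have hC'C : C' ⊆ C := hCeq ▸ Set.subset_sUnion_of_mem hC'𝒞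
      have hy1 : y ∈ Ml.closure (C' \ {y}) := aux_circuit_closure (h𝒞 C' hC'𝒞) hyC'
      have hy2 : y ∈ Ml.closure F :=
        Ml.closure_subset_closure ((diff_subset_diff_left hC'C).trans hCF) hy1
      have hsp : Ml.Spanning F := by
        rw [Matroid.spanning_iff_ground_subset_closure hFE]
        have hcl : Ml.closure (insert y F) = Ml.closure F :=
          Matroid.closure_insert_eq_of_mem_closure hy2
        have hsub : F₁ ⊆ insert y F := by
          intro a ha
          by_cases hay : a = y
          · exact Or.inl hay
          · exact Or.inr (Or.inr ⟨ha, hay⟩)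
        calc Ml.E = Ml.closure F₁ := hS₁.closure_eq.symm
          _ ⊆ Ml.closure (insert y F) := Ml.closure_subset_closure hsub
          _ = Ml.closure F := hcl
      refine ⟨y, Set.mem_symmDiff.2 (Or.inl ⟨hyF₁, hyF₂⟩), ?_⟩
      have heq : F₁ ∆ ({x, y} : Set α) = F := by
        ext a
        simp only [Set.mem_symmDiff, Set.mem_insert_iff, Set.mem_singleton_iff, hF,
          Set.mem_diff]
        constructor
        · rintro (⟨ha, hax⟩ | ⟨(rfl | rfl), ha⟩)
          · push_neg at hax
            exact Or.inr ⟨ha, hax.2⟩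
          · exact Or.inl rfl
          · exact absurd hyF₁ ha
        · rintro (rfl | ⟨ha, hay⟩)
          · exact Or.inr ⟨Or.inl rfl, hxF₁⟩
          · exact Or.inl ⟨ha, by rintro (rfl | rfl); exacts [hxF₁ ha, hay rfl]⟩
      rw [heq]; exact mem𝓕 _ hFind hsp
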